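/- If an entailment relation ▷ is inductively generated only by axioms (no non-axiom generating rules beyond (R), (M), (T)) and j is a nucleus over ▷, then ▷^j = ▷_j; i.e., U ▷^j a if and only if U ▷ ja. -/

import Mathlib

/-!
`▷_j` is an entailment relation: (R) and (M) come from those of `▷` via `Rj`, and (T) is
the cut of `▷` after `Lj` has turned the cut formula `b` into `jb`. It contains every axiom
(by `Rj`) and every stability axiom `ja ▷_j a` (by reflexivity), so by minimality
`▷^j ⊆ ▷_j`. Only axioms transfer this way: a rule with premisses need not hold in `▷_j`.
Conversely, `U ▷ ja` gives `U ▷^j ja`, and cutting with `ja ▷^j a` gives `U ▷^j a`.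
-/

/-- A single-conclusion entailment relation on `S`. -/
structure IsEntailment {S : Type*} [DecidableEq S] (E : Finset S → S → Prop) : Prop where
  refl : ∀ (U : Finset S) (a : S), a ∈ U → E U a
  mono : ∀ (U U' : Finset S) (a : S), E U a → E (U ∪ U') a
  cut : ∀ (V V' : Finset S) (a b : S), E V b → E (insert b V') a → E (V ∪ V') a

/-- A nucleus over an entailment relation. -/
structure IsNucleus {S : Type*} [DecidableEq S] (E : Finset S → S → Prop) (j : S → S) : Prop where
  lj : ∀ (U : Finset S) (a b : S), E (insert a U) (j b) → E (insert (j a) U) (j b)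
  rj : ∀ (U : Finset S) (b : S), E U b → E U (j b)

/-- A rule (instance): a set of premisses together with a conclusion. -/
abbrev EntRule (S : Type*) := Set (Finset S × S) × (Finset S × S)

/-- A relation satisfies a rule if the conclusion holds whenever all premisses do. -/
def RuleSat {S : Type*} (E : Finset S → S → Prop) (r : EntRule S) : Prop :=
  (∀ p ∈ r.1, E p.1 p.2) → E r.2.1 r.2.2

/-- The entailment relation inductively generated by a set of axioms and rules. -/
def Derives {S : Type*} [DecidableEq S] (Rules : Set (EntRule S))
    (U : Finset S) (a : S) : Prop :=
  ∀ E : Finset S → S → Prop, IsEntailment E → (∀ r ∈ Rules, RuleSat E r) → E U a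

/-- The stability axioms `ja ▷ a`, viewed as rules without premisses. -/
def StabRules {S : Type*} (j : S → S) : Set (EntRule S) :=
  {r | ∃ a : S, r = (∅, ({j a}, a))}

section

variable {S : Type*} [DecidableEq S]

namespace Derives

variable {Rules : Set (EntRule S)}

theorem isEntailment : IsEntailment (Derives Rules) where
  refl U a h _ hE _ := hE.refl U a h
  mono U U' a h E hE hR := hE.mono U U' a (h E hE hR)
  cut V V' a b h₁ h₂ E hE hR := hE.cut V V' a b (h₁ E hE hR) (h₂ E hE hR)

theorem ruleSat_of_mem {r : EntRule S} (hr : r ∈ Rules) : RuleSat (Derives Rules) r :=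
  fun hp E hE hR => hR r hr fun p hpr => hp p hpr E hE hR

theorem of_subset {Rules' : Set (EntRule S)} (hsub : Rules ⊆ Rules') {U : Finset S} {a : S}
    (h : Derives Rules U a) : Derives Rules' U a :=
  fun E hE hR => h E hE fun r hr => hR r (hsub hr)

theorem stab (j : S → S) (a : S) : Derives (Rules ∪ StabRules j) {j a} a :=
  fun _ _ hR => hR (∅, ({j a}, a)) (Or.inr ⟨a, rfl⟩) (by simp)

theorem stab_of_nucleus {j : S → S} {U : Finset S} {a : S} (h : Derives Rules U (j a)) :
    Derives (Rules ∪ StabRules j) U a := by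
  have hja : Derives (Rules ∪ StabRules j) U (j a) := h.of_subset Set.subset_union_left
  simpa using isEntailment.cut U ∅ a (j a) hja (by simpa using stab j a)

end Derives

/-- The relation `▷_j` of the paper. -/
def nucleusEntails (E : Finset S → S → Prop) (j : S → S) (U : Finset S) (a : S) : Prop :=
  E U (j a)

namespace IsNucleus

variable {E : Finset S → S → Prop} {j : S → S}

theorem isEntailment_nucleusEntails (hE : IsEntailment E) (hj : IsNucleus E j) :
    IsEntailment (nucleusEntails E j) where
  refl U a ha := hj.rj U a (hE.refl U a ha)
  mono U U' a := hE.mono U U' (j a)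
  cut V V' a b h₁ h₂ := hE.cut V V' (j a) (j b) h₁ (hj.lj V' b a h₂)

theorem ruleSat_nucleusEntails_of_axiom (hj : IsNucleus E j) {r : EntRule S} (hr : r.1 = ∅)
    (h : RuleSat E r) : RuleSat (nucleusEntails E j) r :=
  fun _ => hj.rj _ _ (h (by simp [hr]))

theorem ruleSat_nucleusEntails_stab (hE : IsEntailment E) {r : EntRule S}
    (hr : r ∈ StabRules j) : RuleSat (nucleusEntails E j) r := by
  obtain ⟨a, rfl⟩ := hr
  exact fun _ => hE.refl {j a} (j a) (Finset.mem_singleton_self _)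

end IsNucleus

end

/-- if `▷` is generated only by axioms, then `▷^j = ▷_j`. -/
theorem conservation_of_axiom_generated {S : Type*} [DecidableEq S]
    (Rules : Set (EntRule S)) (j : S → S)
    (hax : ∀ r ∈ Rules, r.1 = ∅)
    (hj : IsNucleus (Derives Rules) j) :
    ∀ (U : Finset S) (a : S),
      Derives (Rules ∪ StabRules j) U a ↔ Derives Rules U (j a) := by
  intro U a
  constructor
  · intro h
    refine h (nucleusEntails (Derives Rules) j)
      (hj.isEntailment_nucleusEntails Derives.isEntailment) ?_
    rintro r (hr | hr)
    · exact hj.ruleSat_nucleusEntails_of_axiom (hax r hr) (Derives.ruleSat_of_mem hr)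
    · exact IsNucleus.ruleSat_nucleusEntails_stab Derives.isEntailment hr
  · exact Derives.stab_of_nucleus
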